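/- arXiv:1505.05353 — 2 statements merged into one kernel-verified Lean document; each statement's English description precedes it below -/
import Mathlib

section
/- Let w ≠ 1 be an element of the Coxeter group W admitting a unique reduced expression, i.e. there is exactly one list over the index type B that is a reduced word for w. Then w has exactly one left descent and exactly one right descent. Consequently, the sets C_s = {w ∈ C : ℓ(ws) < ℓ(w)}, for s ranging over the simple reflections, form a partition of the set C of nontrivial elements with a unique reduced expression. -/
/-!
If `s` is a left descent of `w`, prepending `s` to a reduced word for `s w` gives a reduced word
for `w` starting with `s`. So every left descent of `w` is the first letter of its unique reduced
word, and dually every right descent is the last letter; a nontrivial element has at least one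
descent on each side.
-/

open CoxeterSystem

/-- `w` admits a unique reduced expression: there is exactly one list over `B` that is a
reduced word for `w`. -/
def HasUniqueReducedWord {B : Type} {M : CoxeterMatrix B} {W : Type*} [Group W]
    (cs : CoxeterSystem M W) (w : W) : Prop :=
  ∃! l : List B, cs.wordProd l = w ∧ l.length = cs.length w

/-- The set `C` of nontrivial elements of `W` with a unique reduced expression. -/
def uniqExprSet {B : Type} {M : CoxeterMatrix B} {W : Type*} [Group W]
    (cs : CoxeterSystem M W) : Set W :=
  { w | w ≠ 1 ∧ HasUniqueReducedWord cs w }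

/-- The set `C_s = {w ∈ C : ℓ(ws) < ℓ(w)}` for a simple reflection indexed by `i`. -/
def uniqExprCell {B : Type} {M : CoxeterMatrix B} {W : Type*} [Group W]
    (cs : CoxeterSystem M W) (i : B) : Set W :=
  { w | w ∈ uniqExprSet cs ∧ cs.IsRightDescent w i }

section

variable {B : Type} {M : CoxeterMatrix B} {W : Type*} [Group W] (cs : CoxeterSystem M W)
  {w : W} {i : B}

theorem CoxeterSystem.exists_reducedWord_cons_of_isLeftDescent (hi : cs.IsLeftDescent w i) :
    ∃ ω : List B, cs.wordProd (i :: ω) = w ∧ (i :: ω).length = cs.length w := by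
  obtain ⟨ω, hω, hprod⟩ := cs.exists_isReduced (cs.simple i * w)
  refine ⟨ω, ?_, ?_⟩
  · rw [cs.wordProd_cons, ← hprod, ← mul_assoc, cs.simple_mul_simple_self, one_mul]
  · rw [List.length_cons, ← hω.eq, ← hprod, cs.isLeftDescent_iff.mp hi]

theorem CoxeterSystem.exists_reducedWord_concat_of_isRightDescent (hi : cs.IsRightDescent w i) :
    ∃ ω : List B, cs.wordProd (ω ++ [i]) = w ∧ (ω ++ [i]).length = cs.length w := by
  obtain ⟨ω, hω, hprod⟩ := cs.exists_isReduced (w * cs.simple i)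
  refine ⟨ω, ?_, ?_⟩
  · rw [cs.wordProd_append, cs.wordProd_singleton, ← hprod, mul_assoc, cs.simple_mul_simple_self, mul_one]
  · rw [List.length_append, List.length_singleton, ← hω.eq, ← hprod,
      cs.isRightDescent_iff.mp hi]

namespace HasUniqueReducedWord

variable {cs} {ω : List B}

theorem head?_eq_of_isLeftDescent (hu : HasUniqueReducedWord cs w)
    (hω : cs.wordProd ω = w ∧ ω.length = cs.length w) (hi : cs.IsLeftDescent w i) :
    ω.head? = some i := by
  obtain ⟨ω', hω'⟩ := cs.exists_reducedWord_cons_of_isLeftDescent hi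
  rw [hu.unique hω hω', List.head?_cons]

theorem getLast?_eq_of_isRightDescent (hu : HasUniqueReducedWord cs w)
    (hω : cs.wordProd ω = w ∧ ω.length = cs.length w) (hi : cs.IsRightDescent w i) :
    ω.getLast? = some i := by
  obtain ⟨ω', hω'⟩ := cs.exists_reducedWord_concat_of_isRightDescent hi
  rw [hu.unique hω hω', List.getLast?_concat]

theorem existsUnique_isLeftDescent (hu : HasUniqueReducedWord cs w) (hw : w ≠ 1) :
    ∃! i : B, cs.IsLeftDescent w i := by
  obtain ⟨ω, hω⟩ := hu.exists
  obtain ⟨i, hi⟩ := cs.exists_leftDescent_of_ne_one hw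
  refine ⟨i, hi, fun j hj => ?_⟩
  exact Option.some.inj ((hu.head?_eq_of_isLeftDescent hω hj).symm.trans
    (hu.head?_eq_of_isLeftDescent hω hi))

theorem existsUnique_isRightDescent (hu : HasUniqueReducedWord cs w) (hw : w ≠ 1) :
    ∃! i : B, cs.IsRightDescent w i := by
  obtain ⟨ω, hω⟩ := hu.exists
  obtain ⟨i, hi⟩ := cs.exists_rightDescent_of_ne_one hw
  refine ⟨i, hi, fun j hj => ?_⟩
  exact Option.some.inj ((hu.getLast?_eq_of_isRightDescent hω hj).symm.trans
    (hu.getLast?_eq_of_isRightDescent hω hi))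

end HasUniqueReducedWord

end

/-- A nontrivial element with a unique reduced expression has exactly one left
descent and exactly one right descent; consequently the sets `C_s` form a partition of `C`. -/
theorem uniqExpr_unique_descents_and_partition {B : Type} {M : CoxeterMatrix B} {W : Type*}
    [Group W] (cs : CoxeterSystem M W) :
    (∀ w ∈ uniqExprSet cs,
      (∃! i : B, cs.IsLeftDescent w i) ∧ (∃! i : B, cs.IsRightDescent w i)) ∧
    (∀ w ∈ uniqExprSet cs, ∃! i : B, w ∈ uniqExprCell cs i) ∧
    (⋃ i : B, uniqExprCell cs i) = uniqExprSet cs := by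
  have hright : ∀ w ∈ uniqExprSet cs, ∃! i : B, cs.IsRightDescent w i :=
    fun w hw => hw.2.existsUnique_isRightDescent hw.1
  refine ⟨fun w hw => ⟨hw.2.existsUnique_isLeftDescent hw.1, hright w hw⟩, fun w hw => ?_, ?_⟩
  · obtain ⟨i, hi, huniq⟩ := hright w hw
    exact ⟨i, ⟨hw, hi⟩, fun j hj => huniq j hj.2⟩
  · ext w
    simp only [Set.mem_iUnion]
    refine ⟨fun ⟨_, hw, _⟩ => hw, fun hw => ?_⟩
    obtain ⟨i, hi, -⟩ := hright w hw
    exact ⟨i, hw, hi⟩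
end

section
/- Assume the Coxeter system (W, S) is irreducible, i.e. its Coxeter graph is connected. For any simple reflection s, the graph Γ_s — with vertex set C_s, where distinct x, y ∈ C_s are adjacent if and only if y = t·x for some simple reflection t — is a tree (a connected acyclic simple graph). -/
open CoxeterSystem

/-- The graph `Γ_s`: vertices are the elements of `C_s`, and distinct `x, y` are adjacent iff
`y = t·x` for some simple reflection `t`. -/
def gammaGraph {B : Type} {M : CoxeterMatrix B} {W : Type*} [Group W]
    (cs : CoxeterSystem M W) (i : B) : SimpleGraph (uniqExprCell cs i) where
  Adj x y := x ≠ y ∧ ∃ t : B, (y : W) = cs.simple t * (x : W)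
  symm := by
    constructor
    rintro x y ⟨hxy, t, ht⟩
    exact ⟨hxy.symm, t, by rw [ht, cs.simple_mul_simple_cancel_left]⟩
  loopless := by
    constructor
    rintro x ⟨hxx, -⟩
    exact hxx rfl

/-- The Coxeter graph of `(W, S)`: vertices are the elements of `B`, and `s ≠ t` are adjacent
iff `M s t ≥ 3`. -/
def coxeterGraph {B : Type} (M : CoxeterMatrix B) : SimpleGraph B where
  Adj s t := s ≠ t ∧ 3 ≤ M s t
  symm := by
    constructor
    rintro s t ⟨h1, h2⟩
    exact ⟨h1.symm, by rwa [M.symmetric t s]⟩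
  loopless := by
    constructor
    rintro s ⟨hss, -⟩
    exact hss rfl

/-!
Build `Γ_s` as a rooted tree: every `w ∈ C_s` other than `s` has length at least `2`, and if `t`
is a left descent of `w` then the unique reduced word of `w` starts with `t` and ends with `s`,
so `t·w` is again in `C_s`, one step shorter. Thus `s` can be reached from every vertex by
descending in length. Conversely a vertex with a unique reduced word has exactly one left
descent, hence at most one neighbour of smaller length, while a vertex of maximal length on a
cycle would have two.

That `s ∈ C_s` needs `t ↦ s_t` to be injective, which is proved with the geometric
representation: `σ_a σ_b` acts on the plane spanned by `α_a, α_b` as a rotation by `2π / m`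
and trivially on its orthogonal complement.
-/

namespace SimpleGraph

variable {V : Type*} {G : SimpleGraph V}

theorem connected_of_exists_adj_lt (r : V) (f : V → ℕ)
    (hdesc : ∀ v, v ≠ r → ∃ w, G.Adj v w ∧ f w < f v) : G.Connected := by
  have hreach (v : V) : G.Reachable v r := by
    induction v using (measure f).wf.induction with
    | _ v ih =>
      by_cases hvr : v = r
      · rw [hvr]
      · obtain ⟨w, hvw, hlt⟩ := hdesc v hvr
        exact hvw.reachable.trans (ih w hlt)
  have : Nonempty V := ⟨r⟩
  exact ⟨fun u v => (hreach u).trans (hreach v).symm⟩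

theorem isAcyclic_of_unique_adj_lt (f : V → ℕ) (hne : ∀ ⦃x y⦄, G.Adj x y → f x ≠ f y)
    (hunique : ∀ ⦃u x y⦄, G.Adj u x → G.Adj u y → f x < f u → f y < f u → x = y) :
    G.IsAcyclic := by
  classical
  intro v c hc
  obtain ⟨u, hu, hmax⟩ := Set.exists_max_image {x | x ∈ c.support} f
    c.support.finite_toSet ⟨v, c.start_mem_support⟩
  have hc' : (c.rotate u hu).IsCycle := hc.rotate hu
  have hlt {x : V} (hx : x ∈ (c.rotate u hu).support) (hux : G.Adj u x) : f x < f u :=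
    (hmax x ((c.mem_support_rotate_iff u hu).mp hx)).lt_of_ne (hne hux).symm
  have hsnd := (c.rotate u hu).adj_snd hc'.not_nil
  have hpen := ((c.rotate u hu).adj_penultimate hc'.not_nil).symm
  exact hc'.snd_ne_penultimate <| hunique hsnd hpen
    (hlt (Walk.getVert_mem_support ..) hsnd) (hlt (Walk.getVert_mem_support ..) hpen)

end SimpleGraph

open Real

theorem Real.sin_pi_div_pos {m : ℕ} (hm : 2 ≤ m) : 0 < sin (π / m) :=
  sin_pos_of_pos_of_lt_pi (by positivity) (div_lt_self pi_pos (by exact_mod_cast hm))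

-- In the basis `e, f`, `T` is the rotation by `2θ` of a plane spanned by two unit vectors
-- at angle `π - θ`.
theorem Module.End.sin_smul_pow_apply {V : Type*} [AddCommGroup V] [Module ℝ V]
    (T : Module.End ℝ V) (θ : ℝ) {e f : V}
    (he : T e = (4 * cos θ ^ 2 - 1) • e + (2 * cos θ) • f)
    (hf : T f = -(2 * cos θ) • e - f) (n : ℕ) :
    sin θ • (T ^ n) e = sin ((2 * n + 1) * θ) • e + sin (2 * n * θ) • f ∧
      sin θ • (T ^ n) f = -sin (2 * n * θ) • e - sin ((2 * n - 1) * θ) • f := by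
  have hrec (x : ℝ) : sin (x + θ + θ) = 2 * cos θ * sin (x + θ) - sin x := by
    simp only [sin_add, cos_add]
    linear_combination (-sin x) * sin_sq_add_cos_sq θ
  induction n with
  | zero => simp [sub_eq_add_neg, ← neg_smul]
  | succ n ih =>
    have hstep (v : V) : sin θ • (T ^ (n + 1)) v = T (sin θ • (T ^ n) v) := by
      rw [pow_succ', Module.End.mul_apply, map_smul]
    set y := (2 * n - 1) * θ
    have h0 : 2 * (n : ℝ) * θ = y + θ := by ring
    have h1 : (2 * n + 1) * θ = y + θ + θ := by ring
    have h2 : 2 * ((n + 1 : ℕ) : ℝ) * θ = y + θ + θ + θ := by push_cast; ring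
    have h3 : (2 * ((n + 1 : ℕ) : ℝ) + 1) * θ = y + θ + θ + θ + θ := by push_cast; ring
    have h4 : (2 * ((n + 1 : ℕ) : ℝ) - 1) * θ = y + θ + θ := by push_cast; ring
    rw [h0, h1] at ih
    rw [hstep, hstep, ih.1, ih.2, h2, h3, h4]
    simp only [map_add, map_sub, map_smul, he, hf]
    constructor
    · match_scalars
      · linear_combination -hrec (y + θ + θ) - 2 * cos θ * hrec (y + θ)
      · linear_combination -hrec (y + θ)
    · match_scalars
      · linear_combination hrec (y + θ) + 2 * cos θ * hrec y
      · linear_combination hrec y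

namespace CoxeterMatrix

variable {B : Type} (M : CoxeterMatrix B)

-- For `M a b = 0`, i.e. `m = ∞`, the junk value `π / 0 = 0` gives the intended value `-1`.
noncomputable def geometricForm (a b : B) : ℝ := -cos (π / M a b)

noncomputable def simpleCoroot (a : B) : (B →₀ ℝ) →ₗ[ℝ] ℝ :=
  Finsupp.linearCombination ℝ (M.geometricForm a)

noncomputable def geometricReflection (a : B) : Module.End ℝ (B →₀ ℝ) :=
  LinearMap.id - (2 : ℝ) • (M.simpleCoroot a).smulRight (Finsupp.single a 1)

theorem geometricForm_self (a : B) : M.geometricForm a a = 1 := by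
  simp [geometricForm]

theorem simpleCoroot_single (a b : B) (r : ℝ) :
    M.simpleCoroot a (Finsupp.single b r) = r * M.geometricForm a b := by
  simp [simpleCoroot, Finsupp.linearCombination_single, smul_eq_mul]

theorem geometricReflection_apply (a : B) (v : B →₀ ℝ) :
    M.geometricReflection a v = v - (2 * M.simpleCoroot a v) • Finsupp.single a 1 := by
  simp [geometricReflection]

theorem geometricReflection_single_self (a : B) :
    M.geometricReflection a (Finsupp.single a 1) = -Finsupp.single a 1 := by
  rw [geometricReflection_apply, simpleCoroot_single, geometricForm_self]
  module

theorem geometricReflection_single (a b : B) :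
    M.geometricReflection a (Finsupp.single b 1) =
      Finsupp.single b 1 + (2 * cos (π / M a b)) • Finsupp.single a 1 := by
  rw [geometricReflection_apply, simpleCoroot_single, geometricForm]
  module

theorem geometricReflection_apply_of_simpleCoroot_eq_zero {a : B} {v : B →₀ ℝ}
    (h : M.simpleCoroot a v = 0) : M.geometricReflection a v = v := by
  rw [geometricReflection_apply, h, mul_zero, zero_smul, sub_zero]

theorem geometricReflection_mul_self (a : B) :
    M.geometricReflection a * M.geometricReflection a = 1 := by
  refine LinearMap.ext fun v => ?_
  have h : M.simpleCoroot a (M.geometricReflection a v) = -M.simpleCoroot a v := by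
    rw [geometricReflection_apply, map_sub, map_smul, simpleCoroot_single, geometricForm_self]
    ring_nf
  rw [Module.End.mul_apply, geometricReflection_apply _ _ (M.geometricReflection a v), h,
    geometricReflection_apply, Module.End.one_apply]
  module

theorem geometricReflection_mul_pow_single {a b : B} (hm : 2 ≤ M a b) :
    ((M.geometricReflection a * M.geometricReflection b) ^ M a b) (Finsupp.single a 1) =
        Finsupp.single a 1 ∧
      ((M.geometricReflection a * M.geometricReflection b) ^ M a b) (Finsupp.single b 1) =
        Finsupp.single b 1 := by
  set θ := π / M a b with hθ
  have hm0 : (M a b : ℝ) ≠ 0 := by positivity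
  have hsin : sin θ ≠ 0 := (sin_pi_div_pos hm).ne'
  have he : (M.geometricReflection a * M.geometricReflection b) (Finsupp.single a 1) =
      (4 * cos θ ^ 2 - 1) • Finsupp.single a 1 + (2 * cos θ) • Finsupp.single b 1 := by
    rw [Module.End.mul_apply, geometricReflection_single, map_add, map_smul,
      geometricReflection_single_self, geometricReflection_single, M.symmetric]
    module
  have hf : (M.geometricReflection a * M.geometricReflection b) (Finsupp.single b 1) =
      -(2 * cos θ) • Finsupp.single a 1 - Finsupp.single b 1 := by
    rw [Module.End.mul_apply, geometricReflection_single_self, map_neg,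
      geometricReflection_single]
    module
  obtain ⟨hpa, hpb⟩ := Module.End.sin_smul_pow_apply _ θ he hf (M a b)
  have h2m : 2 * (M a b : ℝ) * θ = 2 * π := by rw [hθ]; field_simp
  rw [add_mul, h2m, one_mul, sin_two_pi, add_comm (2 * π), sin_add_two_pi, zero_smul,
    add_zero] at hpa
  rw [sub_mul, h2m, one_mul, sin_two_pi, sin_two_pi_sub, neg_zero, zero_smul, zero_sub,
    neg_smul, neg_neg] at hpb
  exact ⟨smul_right_injective _ hsin hpa, smul_right_injective _ hsin hpb⟩

theorem exists_simpleCoroot_eq_zero {a b : B} (hm : 2 ≤ M a b) (v : B →₀ ℝ) :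
    ∃ x y : ℝ,
      M.simpleCoroot a (v - x • Finsupp.single a 1 - y • Finsupp.single b 1) = 0 ∧
        M.simpleCoroot b (v - x • Finsupp.single a 1 - y • Finsupp.single b 1) = 0 := by
  have hc : 1 - cos (π / M a b) ^ 2 ≠ 0 := by
    nlinarith [sin_pi_div_pos hm, sin_sq_add_cos_sq (π / M a b)]
  -- Invert the Gram matrix `!![1, -c; -c, 1]` of `α_a, α_b`, where `c = cos (π / m)`.
  refine ⟨(M.simpleCoroot a v + cos (π / M a b) * M.simpleCoroot b v) /
      (1 - cos (π / M a b) ^ 2),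
    (M.simpleCoroot b v + cos (π / M a b) * M.simpleCoroot a v) / (1 - cos (π / M a b) ^ 2),
    ?_, ?_⟩ <;>
  · simp only [map_sub, map_smul, simpleCoroot_single, geometricForm_self, smul_eq_mul]
    simp only [geometricForm, M.symmetric b a]
    field_simp
    ring

theorem geometricReflection_mul_pow {a b : B} (hm : 2 ≤ M a b) :
    (M.geometricReflection a * M.geometricReflection b) ^ M a b = 1 := by
  refine LinearMap.ext fun v => ?_
  obtain ⟨x, y, ha, hb⟩ := M.exists_simpleCoroot_eq_zero hm v
  set u := v - x • Finsupp.single a 1 - y • Finsupp.single b 1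
  have hu : (M.geometricReflection a * M.geometricReflection b) u = u := by
    rw [Module.End.mul_apply, geometricReflection_apply_of_simpleCoroot_eq_zero _ hb,
      geometricReflection_apply_of_simpleCoroot_eq_zero _ ha]
  have hv : v = u + x • Finsupp.single a 1 + y • Finsupp.single b 1 := by
    simp only [u]
    abel
  obtain ⟨hpa, hpb⟩ := M.geometricReflection_mul_pow_single hm
  rw [hv, map_add, map_add, map_smul, map_smul, hpa, hpb, Module.End.pow_apply,
    Function.iterate_fixed hu, Module.End.one_apply]

theorem isLiftable_geometricReflection : M.IsLiftable M.geometricReflection := by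
  intro a b
  rcases eq_or_ne a b with rfl | hab
  · rw [M.diagonal a, pow_one, geometricReflection_mul_self]
  · obtain h | h | h : M a b = 0 ∨ M a b = 1 ∨ 2 ≤ M a b := by omega
    · rw [h, pow_zero]
    · exact absurd h (M.off_diagonal a b hab)
    · exact M.geometricReflection_mul_pow h

end CoxeterMatrix

namespace CoxeterSystem

variable {B : Type} {M : CoxeterMatrix B} {W : Type*} [Group W] (cs : CoxeterSystem M W)

theorem simple_injective : Function.Injective cs.simple := by
  intro i j hij
  by_contra hne
  have h := congrArg
    (fun w => cs.lift ⟨_, M.isLiftable_geometricReflection⟩ w (Finsupp.single i 1) i) hij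
  simp [lift_apply_simple, M.geometricReflection_single_self, M.geometricReflection_apply,
    Finsupp.single_eq_of_ne hne] at h
  norm_num at h

theorem simple_mem_uniqExprCell (i : B) : cs.simple i ∈ uniqExprCell cs i := by
  refine ⟨⟨fun h => ?_, [i], ⟨cs.wordProd_singleton i, ?_⟩, fun l ⟨hl, hlen⟩ => ?_⟩,
    ?_⟩
  · simpa [h] using cs.length_simple i
  · rw [cs.length_simple, List.length_singleton]
  · rw [cs.length_simple] at hlen
    obtain ⟨j, rfl⟩ := List.length_eq_one_iff.mp hlen
    rw [cs.wordProd_singleton] at hl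
    rw [cs.simple_injective hl]
  · rw [IsRightDescent, cs.simple_mul_simple_self, cs.length_one, cs.length_simple]
    exact Nat.one_pos

theorem exists_isReduced_cons_of_isLeftDescent {w : W} {t : B} (ht : cs.IsLeftDescent w t) :
    ∃ l, cs.IsReduced (t :: l) ∧ cs.wordProd (t :: l) = w := by
  obtain ⟨l, hl, hprod⟩ := cs.exists_isReduced (cs.simple t * w)
  have hw : cs.wordProd (t :: l) = w := by
    rw [cs.wordProd_cons, ← hprod, cs.simple_mul_simple_cancel_left]
  refine ⟨l, ?_, hw⟩
  rw [IsReduced, hw, List.length_cons, ← hl.eq, ← hprod, ← cs.isLeftDescent_iff.mp ht]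

theorem exists_isReduced_concat_of_isRightDescent {w : W} {i : B} (hi : cs.IsRightDescent w i) :
    ∃ l, cs.IsReduced (l ++ [i]) ∧ cs.wordProd (l ++ [i]) = w := by
  obtain ⟨l, hl, hprod⟩ := cs.exists_isReduced (w * cs.simple i)
  have hw : cs.wordProd (l ++ [i]) = w := by
    rw [cs.wordProd_append, cs.wordProd_singleton, ← hprod, cs.simple_mul_simple_cancel_right]
  refine ⟨l, ?_, hw⟩
  rw [IsReduced, hw, List.length_append, List.length_singleton, ← hl.eq, ← hprod,
    ← cs.isRightDescent_iff.mp hi]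

variable {cs}

theorem HasUniqueReducedWord.eq {w : W} (hw : HasUniqueReducedWord cs w) {l l' : List B}
    (hl : cs.IsReduced l) (hlw : cs.wordProd l = w) (hl' : cs.IsReduced l')
    (hlw' : cs.wordProd l' = w) : l = l' :=
  hw.unique ⟨hlw, hlw ▸ hl.symm⟩ ⟨hlw', hlw' ▸ hl'.symm⟩

theorem HasUniqueReducedWord.isLeftDescent_unique {w : W} (hw : HasUniqueReducedWord cs w)
    {a b : B} (ha : cs.IsLeftDescent w a) (hb : cs.IsLeftDescent w b) : a = b := by
  obtain ⟨la, hla, hwa⟩ := cs.exists_isReduced_cons_of_isLeftDescent ha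
  obtain ⟨lb, hlb, hwb⟩ := cs.exists_isReduced_cons_of_isLeftDescent hb
  exact List.head_eq_of_cons_eq (hw.eq hla hwa hlb hwb)

variable (cs)

theorem isRightDescent_wordProd_concat {l : List B} {i : B} (hl : cs.IsReduced (l ++ [i])) :
    cs.IsRightDescent (cs.wordProd (l ++ [i])) i := by
  rw [IsRightDescent, hl.eq, cs.wordProd_append, cs.wordProd_singleton,
    cs.simple_mul_simple_cancel_right, List.length_append, List.length_singleton]
  exact Nat.lt_succ_of_le (cs.length_wordProd_le l)

theorem eq_simple_of_isRightDescent_of_length_eq_one {w : W} {i : B} (hw : cs.length w = 1)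
    (hi : cs.IsRightDescent w i) : w = cs.simple i := by
  have h : w * cs.simple i = 1 := cs.length_eq_zero_iff.mp (by rw [IsRightDescent, hw] at hi; omega)
  rw [mul_eq_one_iff_eq_inv, inv_simple] at h
  exact h

theorem simple_mul_mem_uniqExprCell {i t : B} {w : W} (hw : w ∈ uniqExprCell cs i)
    (ht : cs.IsLeftDescent w t) (h2 : 2 ≤ cs.length w) :
    cs.simple t * w ∈ uniqExprCell cs i := by
  obtain ⟨⟨-, huniq⟩, hi⟩ := hw
  obtain ⟨l, hred, hprod⟩ := cs.exists_isReduced_cons_of_isLeftDescent ht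
  obtain ⟨l', hred', hprod'⟩ := cs.exists_isReduced_concat_of_isRightDescent hi
  have hl : cs.IsReduced l := by simpa using hred.drop 1
  have hv : cs.simple t * w = cs.wordProd l := by
    rw [← hprod, cs.wordProd_cons, cs.simple_mul_simple_cancel_left]
  have hlen : cs.length w = l.length + 1 := by rw [← hprod, hred.eq, List.length_cons]
  rw [hv]
  refine ⟨⟨fun h1 => ?_, l, ⟨rfl, hl.symm⟩, fun l₂ ⟨hl₂, hlen₂⟩ => ?_⟩, ?_⟩
  · rw [← cs.length_eq_zero_iff, hl.eq] at h1
    omega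
  · have hw₂ : cs.wordProd (t :: l₂) = w := by
      rw [cs.wordProd_cons, hl₂, ← hv, cs.simple_mul_simple_cancel_left]
    have hred₂ : cs.IsReduced (t :: l₂) := by
      rw [IsReduced, hw₂, List.length_cons, hlen₂, hl.eq, hlen]
    exact List.tail_eq_of_cons_eq (huniq.eq hred₂ hw₂ hred hprod)
  · -- the unique reduced word of `w` both starts with `t` and ends with `i`
    have heq := huniq.eq hred hprod hred' hprod'
    cases l' with
    | nil =>
      rw [List.nil_append, List.cons_eq_cons] at heq
      rw [heq.2, List.length_nil] at hlen
      omega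
    | cons _ l'' =>
      obtain ⟨-, rfl⟩ := List.cons_eq_cons.mp heq
      exact cs.isRightDescent_wordProd_concat hl

variable {cs} {i : B}

theorem length_ne_of_gammaGraph_adj {x y : uniqExprCell cs i} (h : (gammaGraph cs i).Adj x y) :
    cs.length x ≠ cs.length y := by
  obtain ⟨-, t, ht⟩ := h
  rw [ht]
  exact (cs.length_simple_mul_ne _ t).symm

theorem eq_of_gammaGraph_adj_of_length_lt {u x y : uniqExprCell cs i}
    (hx : (gammaGraph cs i).Adj u x) (hy : (gammaGraph cs i).Adj u y)
    (hxu : cs.length x < cs.length u) (hyu : cs.length y < cs.length u) : x = y := by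
  obtain ⟨-, t, hxt⟩ := hx
  obtain ⟨-, t', hyt⟩ := hy
  have htt' : t = t' := u.2.1.2.isLeftDescent_unique (by rwa [IsLeftDescent, ← hxt])
    (by rwa [IsLeftDescent, ← hyt])
  exact Subtype.ext (by rw [hxt, hyt, htt'])

theorem exists_gammaGraph_adj_length_lt (v : uniqExprCell cs i)
    (hv : v ≠ ⟨cs.simple i, cs.simple_mem_uniqExprCell i⟩) :
    ∃ w, (gammaGraph cs i).Adj v w ∧ cs.length w < cs.length v := by
  have h0 : cs.length v ≠ 0 := fun h => v.2.1.1 (cs.length_eq_zero_iff.mp h)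
  have h1 : cs.length v ≠ 1 := fun h =>
    hv (Subtype.ext (cs.eq_simple_of_isRightDescent_of_length_eq_one h v.2.2))
  obtain ⟨t, ht⟩ := cs.exists_leftDescent_of_ne_one v.2.1.1
  refine ⟨⟨_, cs.simple_mul_mem_uniqExprCell v.2 ht (by omega)⟩, ⟨fun h => ?_, t, rfl⟩,
    ht⟩
  exact ht.ne (congrArg (fun w : uniqExprCell cs i => cs.length w) h).symm

end CoxeterSystem

theorem gammaGraph_isTree_general {B : Type} {M : CoxeterMatrix B} {W : Type*} [Group W]
    (cs : CoxeterSystem M W) (i : B) :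
    (gammaGraph cs i).IsTree := by
  have connected : (gammaGraph cs i).Connected :=
    SimpleGraph.connected_of_exists_adj_lt _ (fun v => cs.length v)
      exists_gammaGraph_adj_length_lt
  have acyclic : (gammaGraph cs i).IsAcyclic :=
    SimpleGraph.isAcyclic_of_unique_adj_lt (fun v => cs.length v)
      (fun _ _ => length_ne_of_gammaGraph_adj) (fun _ _ _ => eq_of_gammaGraph_adj_of_length_lt)
  exact ⟨connected, acyclic⟩

/-- If the Coxeter system `(W, S)` is irreducible (its Coxeter graph is
connected), then for any simple reflection `s` the graph `Γ_s` is a tree. -/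
theorem gammaGraph_isTree {B : Type} {M : CoxeterMatrix B} {W : Type*} [Group W]
    (cs : CoxeterSystem M W) (hirr : (coxeterGraph M).Connected) (i : B) :
    (gammaGraph cs i).IsTree :=
  gammaGraph_isTree_general cs i
end
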